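/- arXiv:1208.0353 — 2 statements merged into one kernel-verified Lean document; each statement's English description precedes it below -/
import Mathlib

section
/- Let P_B : ℂ^n → ℂ^n be the orthogonal projection onto a subspace R(D_B) spanned by the columns of D indexed by B with |B| ≤ k. If A satisfies the D-RIP of order k with constant δ_k (i.e., (1−δ_k)‖Dα‖² ≤ ‖ADα‖² ≤ (1+δ_k)‖Dα‖² for all k-sparse α), then for every z ∈ ℂ^n, ‖P_B A* A P_B z − P_B z‖ ≤ δ_k ‖z‖. -/
/-
On `R(D_B)` the D-RIP reads `|‖A y‖² - ‖y‖²| ≤ δ ‖y‖²`. The operator `T = P_B A* A P_B - P_B` is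
self-adjoint with `re ⟪T z, z⟫ = ‖A P_B z‖² - ‖P_B z‖²`, so `|re ⟪T z, z⟫| ≤ δ ‖P_B z‖² ≤ δ ‖z‖²`;
and the norm of a self-adjoint operator is the supremum of its Rayleigh quotient in absolute value.
-/

noncomputable section

abbrev Vec (n : ℕ) := EuclideanSpace ℂ (Fin n)

/-- Span of the columns of `D` indexed by `B`. -/
def colSpan {n d : ℕ} (D : Vec d →L[ℂ] Vec n) (B : Finset (Fin d)) : Submodule ℂ (Vec n) :=
  Submodule.span ℂ ((fun j => D (EuclideanSpace.single j 1)) '' (B : Set (Fin d)))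

/-- Orthogonal projection onto the span of the columns of `D` indexed by `B`. -/
def P {n d : ℕ} (D : Vec d →L[ℂ] Vec n) (B : Finset (Fin d)) (z : Vec n) : Vec n :=
  ((colSpan D B).orthogonalProjectionOnto z : Vec n)

open Classical in
/-- `α` has at most `k` nonzero entries. -/
def sparse {d : ℕ} (k : ℕ) (α : Vec d) : Prop :=
  (Finset.univ.filter fun i => α i ≠ 0).card ≤ k

/-- `A` satisfies the `D`-RIP of order `k` with constant `δ`. -/
def DRIP {m n d : ℕ} (A : Vec n →L[ℂ] Vec m) (D : Vec d →L[ℂ] Vec n) (k : ℕ) (δ : ℝ) : Prop :=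
  ∀ α : Vec d, sparse k α →
    Real.sqrt (1 - δ) * ‖D α‖ ≤ ‖A (D α)‖ ∧ ‖A (D α)‖ ≤ Real.sqrt (1 + δ) * ‖D α‖

open scoped InnerProductSpace

section RayleighBound

variable {𝕜 E : Type*} [RCLike 𝕜] [NormedAddCommGroup E] [InnerProductSpace 𝕜 E]

theorem ContinuousLinearMap.opNorm_le_of_abs_re_inner_self_le {T : E →L[𝕜] E}
    (hT : (T : E →ₗ[𝕜] E).IsSymmetric) {c : ℝ} (hc : 0 ≤ c)
    (h : ∀ x, |RCLike.re ⟪T x, x⟫_𝕜| ≤ c * ‖x‖ ^ 2) : ‖T‖ ≤ c := by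
  rw [T.norm_eq_iSup_rayleighQuotient hT]
  refine ciSup_le fun x => ?_
  rcases eq_or_ne x 0 with rfl | hx
  · simpa using hc
  · rw [rayleighQuotient, reApplyInnerSelf_apply, abs_div, abs_sq,
      div_le_iff₀ (by positivity)]
    exact h x

end RayleighBound

theorem sparse_of_support_subset {d k : ℕ} {α : Vec d} {B : Finset (Fin d)}
    (hα : ∀ i ∉ B, α i = 0) (hB : B.card ≤ k) : sparse k α := by
  classical
  refine le_trans (Finset.card_le_card fun i hi => ?_) hB
  by_contra hiB
  exact (Finset.mem_filter.mp hi).2 (hα i hiB)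

theorem exists_support_subset_of_mem_colSpan {n d : ℕ} {D : Vec d →L[ℂ] Vec n}
    {B : Finset (Fin d)} {y : Vec n} (hy : y ∈ colSpan D B) :
    ∃ α : Vec d, (∀ i ∉ B, α i = 0) ∧ D α = y := by
  have h : colSpan D B = Submodule.map (D : Vec d →ₗ[ℂ] Vec n)
      (Submodule.span ℂ ((fun j => (EuclideanSpace.single j 1 : Vec d)) '' (B : Set (Fin d)))) := by
    rw [colSpan, Submodule.map_span, Set.image_image]
    rfl
  rw [h] at hy
  obtain ⟨α, hα, rfl⟩ := hy
  refine ⟨α, fun i hi => ?_, rfl⟩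
  induction hα using Submodule.span_induction with
  | mem v hv =>
      obtain ⟨j, hj, rfl⟩ := hv
      simp [show i ≠ j from fun h => hi (h ▸ hj)]
  | zero => rfl
  | add u v _ _ hu hv => simp [hu, hv]
  | smul c u _ hu => simp [hu]

theorem abs_norm_sq_sub_le_of_mem_colSpan {m n d k : ℕ} {A : Vec n →L[ℂ] Vec m}
    {D : Vec d →L[ℂ] Vec n} {δ : ℝ}
    (hA : ∀ α : Vec d, sparse k α →
      (1 - δ) * ‖D α‖ ^ 2 ≤ ‖A (D α)‖ ^ 2 ∧ ‖A (D α)‖ ^ 2 ≤ (1 + δ) * ‖D α‖ ^ 2)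
    {B : Finset (Fin d)} (hB : B.card ≤ k) {y : Vec n} (hy : y ∈ colSpan D B) :
    |‖A y‖ ^ 2 - ‖y‖ ^ 2| ≤ δ * ‖y‖ ^ 2 := by
  obtain ⟨α, hα, rfl⟩ := exists_support_subset_of_mem_colSpan hy
  obtain ⟨hlow, hupp⟩ := hA α (sparse_of_support_subset hα hB)
  rw [abs_le]
  constructor <;> linarith

section Compression

variable {𝕜 E F : Type*} [RCLike 𝕜] [NormedAddCommGroup E] [InnerProductSpace 𝕜 E]
  [CompleteSpace E] [NormedAddCommGroup F] [InnerProductSpace 𝕜 F] [CompleteSpace F]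

def gramDeviationOn (A : E →L[𝕜] F) (K : Submodule 𝕜 E) [K.HasOrthogonalProjection] :
    E →L[𝕜] E :=
  ContinuousLinearMap.adjoint (A ∘L K.starProjection) ∘L (A ∘L K.starProjection)
    - K.starProjection

theorem isSymmetric_gramDeviationOn (A : E →L[𝕜] F) (K : Submodule 𝕜 E)
    [K.HasOrthogonalProjection] : (gramDeviationOn A K : E →ₗ[𝕜] E).IsSymmetric := by
  refine LinearMap.IsSymmetric.sub (fun x y => ?_) K.starProjection_isSymmetric
  simp only [ContinuousLinearMap.coe_coe, ContinuousLinearMap.comp_apply,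
    ContinuousLinearMap.adjoint_inner_left, ContinuousLinearMap.adjoint_inner_right]

theorem re_inner_gramDeviationOn_self (A : E →L[𝕜] F) (K : Submodule 𝕜 E)
    [K.HasOrthogonalProjection] (x : E) :
    RCLike.re ⟪gramDeviationOn A K x, x⟫_𝕜 =
      ‖A (K.starProjection x)‖ ^ 2 - ‖K.starProjection x‖ ^ 2 := by
  rw [gramDeviationOn, sub_apply, inner_sub_left, map_sub, ContinuousLinearMap.comp_apply,
    ContinuousLinearMap.adjoint_inner_left, K.re_inner_starProjection_eq_normSq,
    inner_self_eq_norm_sq]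
  rfl

end Compression

theorem stmt0_general {m n d k : ℕ} (A : Vec n →L[ℂ] Vec m) (D : Vec d →L[ℂ] Vec n)
    (δ : ℝ) (hδ0 : 0 < δ)
    (hA : ∀ α : Vec d, sparse k α →
      (1 - δ) * ‖D α‖ ^ 2 ≤ ‖A (D α)‖ ^ 2 ∧ ‖A (D α)‖ ^ 2 ≤ (1 + δ) * ‖D α‖ ^ 2)
    (B : Finset (Fin d)) (hB : B.card ≤ k) (z : Vec n) :
    ‖P D B ((ContinuousLinearMap.adjoint A) (A (P D B z))) - P D B z‖ ≤ δ * ‖z‖ := by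
  set K := colSpan D B
  have hTz : gramDeviationOn A K z =
      P D B ((ContinuousLinearMap.adjoint A) (A (P D B z))) - P D B z := by
    simp only [gramDeviationOn, sub_apply, ContinuousLinearMap.comp_apply,
      ContinuousLinearMap.adjoint_comp, (isSelfAdjoint_starProjection K).adjoint_eq]
    rfl
  have hT : ‖gramDeviationOn A K‖ ≤ δ := by
    refine (gramDeviationOn A K).opNorm_le_of_abs_re_inner_self_le
      (isSymmetric_gramDeviationOn A K) hδ0.le fun x => ?_
    rw [re_inner_gramDeviationOn_self]
    calc _ ≤ δ * ‖K.starProjection x‖ ^ 2 :=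
          abs_norm_sq_sub_le_of_mem_colSpan hA hB (K.starProjection_apply_mem x)
      _ ≤ δ * ‖x‖ ^ 2 := by gcongr; exact K.norm_starProjection_apply_le x
  rw [← hTz]
  exact (gramDeviationOn A K).le_of_opNorm_le hT z

theorem stmt0 {m n d k : ℕ} (A : Vec n →L[ℂ] Vec m) (D : Vec d →L[ℂ] Vec n)
    (δ : ℝ) (hδ0 : 0 < δ) (hδ1 : δ < 1)
    (hA : ∀ α : Vec d, sparse k α →
      (1 - δ) * ‖D α‖ ^ 2 ≤ ‖A (D α)‖ ^ 2 ∧ ‖A (D α)‖ ^ 2 ≤ (1 + δ) * ‖D α‖ ^ 2)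
    (B : Finset (Fin d)) (hB : B.card ≤ k) (z : Vec n) :
    ‖P D B ((ContinuousLinearMap.adjoint A) (A (P D B z))) - P D B z‖ ≤ δ * ‖z‖ :=
  stmt0_general A D δ hδ0 hA B hB z
end
end

section
/- Suppose the m×n matrix A satisfies ‖Ax‖ ≤ √(1+δ_k)‖x‖ for every k-sparse vector x ∈ ℂ^n. Then for every z ∈ ℂ^n, ‖Az‖ ≤ √(1+δ_k)(‖z‖₂ + ‖z‖₁/√k). -/
noncomputable section

/-
Sort the entries of `z` by modulus and cut them into consecutive blocks `T₀, T₁, …` of size `k`.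
Each `z_{Tⱼ}` is `k`-sparse, so `‖A z‖ ≤ √(1+δ) ∑ⱼ ‖z_{Tⱼ}‖`. Here `‖z_{T₀}‖ ≤ ‖z‖`, and for
`j ≥ 1` every entry of `z_{Tⱼ}` is at most the mean modulus on `T_{j-1}`, so
`‖z_{Tⱼ}‖ ≤ √k · ‖z_{T_{j-1}}‖₁ / k = ‖z_{T_{j-1}}‖₁ / √k`; summing gives `‖z‖₁ / √k`.
The blocks are peeled off one at a time, by induction on the support size carrying a bound
on the entries.
-/

open Finset
open scoped Classical

namespace Finset

variable {ι β : Type*} [LinearOrder β]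

theorem exists_subset_card_eq_forall_sdiff_le (s : Finset ι) (f : ι → β) {m : ℕ} (hm : m ≤ #s) :
    ∃ T ⊆ s, #T = m ∧ ∀ i ∈ T, ∀ j ∈ s \ T, f j ≤ f i := by
  induction m with
  | zero => exact ⟨∅, empty_subset s, card_empty, by simp⟩
  | succ m ih =>
    obtain ⟨T, hTs, hTm, hT⟩ := ih (by omega)
    obtain ⟨a, ha, ha_max⟩ := exists_max_image (s \ T) f
      (by rw [← card_pos, card_sdiff_of_subset hTs]; omega)
    obtain ⟨has, haT⟩ := mem_sdiff.1 ha
    refine ⟨insert a T, insert_subset has hTs, by rw [card_insert_of_notMem haT, hTm], ?_⟩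
    intro i hi j hj
    have hjT : j ∈ s \ T := by grind
    rcases mem_insert.1 hi with rfl | hi
    · exact ha_max j hjT
    · exact hT i hi j hjT

end Finset

namespace EuclideanSpace

variable {𝕜 ι : Type*} [RCLike 𝕜]

def restrict (T : Finset ι) (x : EuclideanSpace 𝕜 ι) : EuclideanSpace 𝕜 ι :=
  WithLp.toLp 2 fun i => if i ∈ T then x i else 0

@[simp]
theorem restrict_apply (T : Finset ι) (x : EuclideanSpace 𝕜 ι) (i : ι) :
    restrict T x i = if i ∈ T then x i else 0 :=
  rfl

theorem norm_restrict_apply_le (T : Finset ι) (x : EuclideanSpace 𝕜 ι) (i : ι) :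
    ‖restrict T x i‖ ≤ ‖x i‖ := by
  by_cases hi : i ∈ T <;> simp [hi]

variable [Fintype ι]

theorem norm_le_of_forall_norm_apply_le {x y : EuclideanSpace 𝕜 ι} (h : ∀ i, ‖x i‖ ≤ ‖y i‖) :
    ‖x‖ ≤ ‖y‖ := by
  rw [norm_eq, norm_eq]
  gcongr with i
  exact h i

theorem norm_le_sqrt_card_support_mul {x : EuclideanSpace 𝕜 ι} {M : ℝ} (hM : 0 ≤ M)
    (h : ∀ i, ‖x i‖ ≤ M) : ‖x‖ ≤ √(#{i | x i ≠ 0} : ℝ) * M := by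
  have hsum : ∑ i, ‖x i‖ ^ 2 ≤ #{i | x i ≠ 0} * M ^ 2 := by
    rw [← sum_filter_of_ne fun i _ hi => by simpa using hi]
    simpa using sum_le_card_nsmul _ _ (M ^ 2) fun i _ => pow_le_pow_left₀ (norm_nonneg _) (h i) 2
  rw [norm_eq, ← Real.sqrt_sq hM, ← Real.sqrt_mul (Nat.cast_nonneg _)]
  exact Real.sqrt_le_sqrt hsum

theorem restrict_add_restrict_compl (T : Finset ι) (x : EuclideanSpace 𝕜 ι) :
    restrict T x + restrict Tᶜ x = x := by
  ext i
  by_cases hi : i ∈ T <;> simp [hi]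

theorem sum_norm_restrict (T : Finset ι) (x : EuclideanSpace 𝕜 ι) :
    ∑ i, ‖restrict T x i‖ = ∑ i ∈ T, ‖x i‖ := by
  simp [apply_ite, sum_ite_mem]

theorem sum_norm_restrict_add_compl (T : Finset ι) (x : EuclideanSpace 𝕜 ι) :
    ∑ i, ‖restrict T x i‖ + ∑ i, ‖restrict Tᶜ x i‖ = ∑ i, ‖x i‖ := by
  rw [sum_norm_restrict, sum_norm_restrict, sum_add_sum_compl]

theorem filter_restrict_ne_zero (T : Finset ι) (x : EuclideanSpace 𝕜 ι) :
    ({i | restrict T x i ≠ 0} : Finset ι) = ({i | x i ≠ 0} : Finset ι) ∩ T := by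
  ext i
  by_cases hi : i ∈ T <;> simp [hi]

-- `u` keeps the `k` largest entries of `z` and `w` the rest.
theorem exists_sparse_add_of_lt_card_support {k : ℕ} (hk : 0 < k) (z : EuclideanSpace 𝕜 ι)
    (hz : k < #{i | z i ≠ 0}) :
    ∃ u w : EuclideanSpace 𝕜 ι, u + w = z ∧ #{i | u i ≠ 0} ≤ k ∧
      #{i | w i ≠ 0} < #{i | z i ≠ 0} ∧ (∀ i, ‖u i‖ ≤ ‖z i‖) ∧
      (∀ i, k * ‖w i‖ ≤ ∑ j, ‖u j‖) ∧ ∑ i, ‖u i‖ + ∑ i, ‖w i‖ = ∑ i, ‖z i‖ := by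
  obtain ⟨T, hTs, hTk, hT⟩ :=
    exists_subset_card_eq_forall_sdiff_le {i | z i ≠ 0} (fun i => ‖z i‖) hz.le
  refine ⟨restrict T z, restrict Tᶜ z, restrict_add_restrict_compl T z, ?_, ?_,
    norm_restrict_apply_le T z, fun j => ?_, sum_norm_restrict_add_compl T z⟩
  · rw [filter_restrict_ne_zero, ← hTk]
    exact card_le_card inter_subset_right
  · rw [filter_restrict_ne_zero, ← sdiff_eq_inter_compl, card_sdiff_of_subset hTs, hTk]
    omega
  · rw [sum_norm_restrict]
    by_cases hj : j ∈ T
    · simpa [hj] using sum_nonneg fun i _ => norm_nonneg (z i)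
    have hdom : ∀ i ∈ T, ‖z j‖ ≤ ‖z i‖ := fun i hi => by
      by_cases hzj : z j = 0
      · simp [hzj]
      · exact hT i hi j (by simp [hzj, hj])
    simpa [hj, hTk] using card_nsmul_le_sum T (fun i => ‖z i‖) _ hdom

variable {G F : Type*} [SeminormedAddCommGroup F] [FunLike G (EuclideanSpace 𝕜 ι) F]
  [AddMonoidHomClass G (EuclideanSpace 𝕜 ι) F]

/- The first term is `min ‖z‖ (√k * M)` so that one bound serves both the first block
(`‖z_{T₀}‖ ≤ ‖z‖`) and the later ones (`‖z_{Tⱼ}‖ ≤ √k M`). -/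
theorem norm_map_le_of_forall_norm_apply_le (A : G) {k : ℕ} (hk : 0 < k) {C : ℝ} (hC : 0 ≤ C)
    (hA : ∀ x : EuclideanSpace 𝕜 ι, #{i | x i ≠ 0} ≤ k → ‖A x‖ ≤ C * ‖x‖)
    (z : EuclideanSpace 𝕜 ι) {M : ℝ} (hM : 0 ≤ M) (hz : ∀ i, ‖z i‖ ≤ M) :
    ‖A z‖ ≤ C * (min ‖z‖ (√k * M) + (∑ i, ‖z i‖) / √k) := by
  have hk' : (0 : ℝ) < √k := Real.sqrt_pos.2 (Nat.cast_pos.2 hk)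
  induction hN : #{i | z i ≠ 0} using Nat.strong_induction_on generalizing z M with
  | _ N ih =>
  have h_sparse {u : EuclideanSpace 𝕜 ι} (hu : #{i | u i ≠ 0} ≤ k) (huz : ∀ i, ‖u i‖ ≤ ‖z i‖) :
      ‖A u‖ ≤ C * min ‖z‖ (√k * M) := by
    refine (hA u hu).trans (mul_le_mul_of_nonneg_left (le_min ?_ ?_) hC)
    · exact norm_le_of_forall_norm_apply_le huz
    · exact (norm_le_sqrt_card_support_mul hM fun i => (huz i).trans (hz i)).trans
        (by gcongr)
  rcases le_or_gt N k with hNk | hkN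
  · calc ‖A z‖ ≤ C * min ‖z‖ (√k * M) := h_sparse (hN ▸ hNk) fun i => le_rfl
      _ ≤ _ := by gcongr; exact le_add_of_nonneg_right (by positivity)
  obtain ⟨u, w, huw, hu, hw, huz, hwu, hsum⟩ := exists_sparse_add_of_lt_card_support hk z (hN ▸ hkN)
  set M' := (∑ i, ‖u i‖) / k
  have hM' : 0 ≤ M' := by positivity
  have hwM' (i : ι) : ‖w i‖ ≤ M' := by
    rw [le_div_iff₀ (by positivity), mul_comm]
    exact hwu i
  have hAw := ih _ (hN ▸ hw) w hM' hwM' rfl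
  have hM'_eq : √k * M' = (∑ i, ‖u i‖) / √k := by
    rw [eq_div_iff hk'.ne', mul_right_comm, Real.mul_self_sqrt (Nat.cast_nonneg k)]
    exact mul_div_cancel₀ _ (by positivity)
  calc ‖A z‖ ≤ ‖A u‖ + ‖A w‖ := by rw [← huw, map_add]; exact norm_add_le _ _
    _ ≤ C * min ‖z‖ (√k * M) + C * (√k * M' + (∑ i, ‖w i‖) / √k) := by
      gcongr
      · exact h_sparse hu huz
      · exact hAw.trans (by gcongr; exact min_le_right _ _)
    _ = C * (min ‖z‖ (√k * M) + (∑ i, ‖z i‖) / √k) := by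
      rw [hM'_eq, ← hsum]
      ring

end EuclideanSpace

theorem stmt3_general {m n k : ℕ} (hk : 0 < k) (A : Vec n →L[ℂ] Vec m) (δ : ℝ)
    (hA : ∀ x : Vec n, sparse k x → ‖A x‖ ≤ Real.sqrt (1 + δ) * ‖x‖) (z : Vec n) :
    ‖A z‖ ≤ Real.sqrt (1 + δ) * (‖z‖ + (∑ i, ‖z i‖) / Real.sqrt k) :=
  calc ‖A z‖ ≤ √(1 + δ) * (min ‖z‖ (√k * ‖z‖) + (∑ i, ‖z i‖) / √k) :=
        EuclideanSpace.norm_map_le_of_forall_norm_apply_le A hk (Real.sqrt_nonneg _) hA z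
          (norm_nonneg z) (PiLp.norm_apply_le z)
    _ ≤ _ := by gcongr; exact min_le_left _ _

theorem stmt3 {m n k : ℕ} (hk : 0 < k) (A : Vec n →L[ℂ] Vec m) (δ : ℝ) (hδ0 : 0 < δ) (hδ1 : δ < 1)
    (hA : ∀ x : Vec n, sparse k x → ‖A x‖ ≤ Real.sqrt (1 + δ) * ‖x‖) (z : Vec n) :
    ‖A z‖ ≤ Real.sqrt (1 + δ) * (‖z‖ + (∑ i, ‖z i‖) / Real.sqrt k) :=
  stmt3_general hk A δ hA z
end
end
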